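/- arXiv:2406.02140 — 2 statements merged into one kernel-verified Lean document; each statement's English description precedes it below -/
import Mathlib

section
/- There exists a universal constant C > 0 with the following property. Let n, m ∈ ℕ, ε ∈ (0, 1/2), δ ∈ [0, 1], p ∈ [2, ∞), and A ∈ ℝ^{m×n}. If a mechanism M : ℝ^n → (probability measures on ℝ^m) is (ε,δ)-differentially private, then err_{ℓ_p^p}(M, A) ≥ (1 − δ̃) · m^{1/p − 1/2} · ‖A‖₁ / (C ε √n), where δ̃ = 2 e^{2ε} (e^{1/2} − 1) δ / (e^ε − 1). -/
open MeasureTheory Matrix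
open scoped ENNReal

noncomputable section

namespace DPPaper

variable {ι κ : Type*}

/-- Two inputs `x, x' : ι → ℝ` are neighboring if `‖x - x'‖₁ ≤ 1`. -/
def Neighboring [Fintype ι] (x x' : ι → ℝ) : Prop :=
  ∑ i, |x i - x' i| ≤ 1

/-- A mechanism `M` (a map from inputs to probability measures on an output space `Ω`)
is `(ε,δ)`-differentially private if for all neighboring inputs and all measurable sets `S`,
`M x S ≤ e^ε · M x' S + δ`. -/
def IsDP [Fintype ι] {Ω : Type*} [MeasurableSpace Ω]
    (M : (ι → ℝ) → Measure Ω) (ε δ : ℝ) : Prop :=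
  ∀ x x' : ι → ℝ, Neighboring x x' → ∀ S : Set Ω, MeasurableSet S →
    M x S ≤ ENNReal.ofReal (Real.exp ε) * M x' S + ENNReal.ofReal δ

/-- The `ℓ_p^p`-error of a mechanism `M` on the query matrix `A`:
`sup_x (E_{Y ~ M x} [ ‖Y - A x‖_p^p ])^{1/p}`, valued in `ℝ≥0∞`. -/
def errLp [Fintype ι] [Fintype κ] (M : (ι → ℝ) → Measure (κ → ℝ))
    (A : Matrix κ ι ℝ) (p : ℝ) : ℝ≥0∞ :=
  ⨆ x : ι → ℝ,
    (∫⁻ y, ENNReal.ofReal (∑ i, |y i - A.mulVec x i| ^ p) ∂(M x)) ^ (1 / p)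

/-- The `q`-trace of a square matrix: `(∑ i, U i i ^ q)^{1/q}`. -/
def trq [Fintype κ] (q : ℝ) (U : Matrix κ κ ℝ) : ℝ :=
  (∑ i, (U i i) ^ q) ^ (1 / q)

/-- The `1 → 2` operator norm of a matrix: the largest `ℓ₂`-norm of a column. -/
def norm12 [Fintype ι] [Fintype κ] (R : Matrix κ ι ℝ) : ℝ :=
  ⨆ j : ι, Real.sqrt (∑ i, (R i j) ^ 2)

/-- The factorization norm `γ_{(p)}(A)`. -/
def gammaP [Fintype ι] [Fintype κ] (p : ℝ) (A : Matrix κ ι ℝ) : ℝ :=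
  sInf { c : ℝ | ∃ (k : ℕ) (L : Matrix κ (Fin k) ℝ) (R : Matrix (Fin k) ι ℝ),
    L * R = A ∧ c = Real.sqrt (trq (p / 2) (L * Lᵀ)) * norm12 R }

/-- The Schatten-1 norm of a matrix: the trace of the PSD square root of `Aᵀ * A`,
i.e. the sum of the singular values of `A`. -/
def schatten1 [Fintype ι] [Fintype κ] [DecidableEq ι] (A : Matrix κ ι ℝ) : ℝ :=
  (((Matrix.posSemidef_conjTranspose_mul_self A).1.eigenvectorUnitary : Matrix ι ι ℝ) *
    Matrix.diagonal ((RCLike.ofReal : ℝ → ℝ) ∘ Real.sqrt ∘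
      (Matrix.posSemidef_conjTranspose_mul_self A).1.eigenvalues) *
    (star (Matrix.posSemidef_conjTranspose_mul_self A).1.eigenvectorUnitary : Matrix ι ι ℝ)).trace

/-- The sensitivity polytope `A B₁^n = {A x : ‖x‖₁ ≤ 1}`. -/
def sensPolytope [Fintype ι] (A : Matrix κ ι ℝ) : Set (κ → ℝ) :=
  {v | ∃ x : ι → ℝ, (∑ i, |x i|) ≤ 1 ∧ v = A.mulVec x}

/-- The width of a set `K` in direction `θ`. -/
def width [Fintype κ] (K : Set (κ → ℝ)) (θ : κ → ℝ) : ℝ :=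
  sSup ((fun v => ∑ i, θ i * v i) '' K) - sInf ((fun v => ∑ i, θ i * v i) '' K)

/-- `κ(A)`: the minimal width of the sensitivity polytope over all unit directions. -/
def kappa [Fintype ι] [Fintype κ] (A : Matrix κ ι ℝ) : ℝ :=
  sInf { c : ℝ | ∃ θ : κ → ℝ, (∑ i, (θ i) ^ 2) = 1 ∧ c = width (sensPolytope A) θ }

/-- The prefix-sum (continual counting) matrix: lower-triangular all ones. -/
def Aprefix (n : ℕ) : Matrix (Fin n) (Fin n) ℝ :=
  fun i j => if j ≤ i then 1 else 0

/-- The covariance matrix of a measure on `κ → ℝ`. -/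
def covMatrix [Fintype κ] (μ : Measure (κ → ℝ)) : Matrix κ κ ℝ :=
  fun i j => ∫ y, (y i - ∫ y', y' i ∂μ) * (y j - ∫ y', y' j ∂μ) ∂μ

/-- The parity query matrix `Q_{d,w}`: rows indexed by `w`-element subsets `P` of `{1,…,d}`,
columns indexed by points of `{-1,1}^d` (encoded as `Fin d → Bool`), entry `∏_{i ∈ P} x_i`. -/
def parityMatrix (d w : ℕ) : Matrix {P : Finset (Fin d) // P.card = w} (Fin d → Bool) ℝ :=
  fun P b => ∏ i ∈ P.1, (if b i then (1 : ℝ) else -1)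

/-- The Hadamard matrices: `H_0 = [1]`, `H_{d+1} = [[H_d, H_d], [H_d, -H_d]]`. -/
def Hadamard : (d : ℕ) → Matrix (Fin (2 ^ d)) (Fin (2 ^ d)) ℝ
  | 0 => fun _ _ => 1
  | (d + 1) =>
    Matrix.reindex
      (finSumFinEquiv.trans (finCongr (by rw [pow_succ, mul_two])))
      (finSumFinEquiv.trans (finCongr (by rw [pow_succ, mul_two])))
      (Matrix.fromBlocks (Hadamard d) (Hadamard d) (Hadamard d) (-(Hadamard d)))

end DPPaper

open DPPaper

/-!
Let `S = (AᵀA)^{1/2}`, so that `schatten1 A = tr S`, and let `T` be the contraction with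
`T A = S`. Run `M` on the vertices `x_z = k z` of the hypercube of side `k = ⌊1/(2ε)⌋`.
Adjacent vertices are `k` unit steps apart, so by group privacy their output laws are
`(e^{kε}, δ_k)`-close with `e^{kε} ≤ 2` and `δ_k ≤ δ̃`. Hence no statistic, in particular
`(T y)_i`, can locate `(S x_z)_i` to better than about `k S_ii` on both ends of an edge in
direction `i`, and Assouad's lemma yields a vertex with `E ‖T y - S x_z‖₁ ≳ k tr S ≳ tr S / ε`.
Finally `‖T v‖₁ ≤ √n ‖v‖₂ ≤ √n m^{1/2-1/p} ‖v‖_p` and Jensen turn this into the bound on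
the `ℓ_p^p` error.
-/

namespace DPPaper

open Finset Unitary ENNReal

section Contraction

variable {ι κ : Type*} [Fintype ι] [Fintype κ]

-- `‖B w‖² = ⟪Bᵀ B w, w⟫ ≤ ‖Bᵀ B w‖ ‖w‖ ≤ ‖B w‖ ‖w‖`.
theorem dotProduct_self_mulVec_le_of_transpose {B : Matrix ι κ ℝ}
    (hB : ∀ u, (Bᵀ *ᵥ u) ⬝ᵥ (Bᵀ *ᵥ u) ≤ u ⬝ᵥ u) (w : κ → ℝ) :
    (B *ᵥ w) ⬝ᵥ (B *ᵥ w) ≤ w ⬝ᵥ w := by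
  set v := B *ᵥ w
  have hv : v ⬝ᵥ v = (Bᵀ *ᵥ v) ⬝ᵥ w := by
    rw [dotProduct_comm v, dotProduct_mulVec, mulVec_transpose]
  have hv0 : 0 ≤ v ⬝ᵥ v := by simpa using dotProduct_star_self_nonneg v
  have hw0 : 0 ≤ w ⬝ᵥ w := by simpa using dotProduct_star_self_nonneg w
  have hcs : (v ⬝ᵥ v) ^ 2 ≤ (v ⬝ᵥ v) * (w ⬝ᵥ w) :=
    calc (v ⬝ᵥ v) ^ 2 ≤ ((Bᵀ *ᵥ v) ⬝ᵥ (Bᵀ *ᵥ v)) * (w ⬝ᵥ w) := by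
          rw [hv]; simpa only [dotProduct, sq] using sum_mul_sq_le_sq_mul_sq univ (Bᵀ *ᵥ v) w
      _ ≤ (v ⬝ᵥ v) * (w ⬝ᵥ w) := by gcongr; exact hB v
  nlinarith

end Contraction

section SqrtGram

variable {ι κ : Type*} [Fintype ι] [Fintype κ] [DecidableEq ι]

-- `(AᵀA)^{1/2}`, in the spectral form used by `schatten1`.
def sqrtGram (A : Matrix κ ι ℝ) : Matrix ι ι ℝ :=
  conjStarAlgAut ℝ _ (posSemidef_conjTranspose_mul_self A).1.eigenvectorUnitary
    (diagonal fun i => √((posSemidef_conjTranspose_mul_self A).1.eigenvalues i))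

theorem schatten1_eq_trace_sqrtGram (A : Matrix κ ι ℝ) : schatten1 A = (sqrtGram A).trace :=
  rfl

theorem posSemidef_conjStarAlgAut_diagonal (V : unitary (Matrix ι ι ℝ)) {d : ι → ℝ}
    (hd : 0 ≤ d) : (conjStarAlgAut ℝ _ V (diagonal d)).PosSemidef :=
  (PosSemidef.diagonal hd).mul_mul_conjTranspose_same _

theorem posSemidef_sqrtGram (A : Matrix κ ι ℝ) : (sqrtGram A).PosSemidef :=
  posSemidef_conjStarAlgAut_diagonal _ fun _ => Real.sqrt_nonneg _

theorem schatten1_nonneg (A : Matrix κ ι ℝ) : 0 ≤ schatten1 A :=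
  (posSemidef_sqrtGram A).trace_nonneg

-- The witness is `T = (AᵀA)^{-1/2} Aᵀ` with `0⁻¹ = 0`, so that `T Tᵀ` is the orthogonal
-- projection onto the range of `AᵀA`.
theorem exists_contraction_mul_eq_sqrtGram (A : Matrix κ ι ℝ) :
    ∃ T : Matrix ι κ ℝ, T * A = sqrtGram A ∧ ∀ w, (T *ᵥ w) ⬝ᵥ (T *ᵥ w) ≤ w ⬝ᵥ w := by
  set hA := (posSemidef_conjTranspose_mul_self A).1
  set c := conjStarAlgAut ℝ (Matrix ι ι ℝ) hA.eigenvectorUnitary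
  set ev := hA.eigenvalues
  have hgram : Aᴴ * A = c (diagonal ev) := by
    simpa only [RCLike.ofReal_real_eq_id, Function.id_comp] using hA.spectral_theorem
  set d : ι → ℝ := fun i => (√(ev i))⁻¹
  refine ⟨c (diagonal d) * Aᴴ, ?_, dotProduct_self_mulVec_le_of_transpose fun u => ?_⟩
  · rw [Matrix.mul_assoc, hgram, ← map_mul, diagonal_mul_diagonal]
    simp only [d, inv_mul_eq_div, Real.div_sqrt]
    rfl
  have hself : (c (diagonal d))ᴴ = c (diagonal d) := by
    rw [← star_eq_conjTranspose, ← map_star, star_eq_conjTranspose, diagonal_conjTranspose]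
    simp
  have hproj : c (diagonal d) * Aᴴ * (c (diagonal d) * Aᴴ)ᵀ
      = c (diagonal fun i => d i * (ev i * d i)) := by
    rw [← conjTranspose_eq_transpose_of_trivial, conjTranspose_mul, conjTranspose_conjTranspose,
      hself, Matrix.mul_assoc, ← Matrix.mul_assoc Aᴴ, hgram]
    simp only [← map_mul, diagonal_mul_diagonal]
  have hpsd : (1 - c (diagonal d) * Aᴴ * (c (diagonal d) * Aᴴ)ᵀ).PosSemidef := by
    rw [hproj, ← map_one c, ← map_sub, ← diagonal_one, diagonal_sub]
    refine posSemidef_conjStarAlgAut_diagonal _ fun i => ?_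
    rcases le_or_gt (ev i) 0 with h | h
    · simp [d, Real.sqrt_eq_zero'.mpr h]
    · have : d i * (ev i * d i) = 1 := by
        simp only [d]; field_simp; exact (Real.sq_sqrt h.le).symm
      simp [this]
  have := hpsd.dotProduct_mulVec_nonneg u
  rwa [star_trivial, sub_mulVec, one_mulVec, dotProduct_sub, ← mulVec_mulVec,
    dotProduct_mulVec, ← mulVec_transpose, sub_nonneg] at this

end SqrtGram

section Norms

variable {ι : Type*} [Fintype ι]

theorem sum_abs_le_sqrt_card_mul_sqrt_dotProduct_self (v : ι → ℝ) :
    ∑ i, |v i| ≤ √(Fintype.card ι) * √(v ⬝ᵥ v) := by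
  simpa [dotProduct, sq] using Real.sum_mul_le_sqrt_mul_sqrt univ (fun _ => 1) (fun i => |v i|)

theorem sqrt_dotProduct_self_le {p : ℝ} (hp : 2 ≤ p) (w : ι → ℝ) :
    √(w ⬝ᵥ w) ≤ (Fintype.card ι : ℝ) ^ (1 / 2 - 1 / p) * (∑ i, |w i| ^ p) ^ (1 / p) := by
  have hpow : ∀ i, (w i ^ 2) ^ (p / 2) = |w i| ^ p := fun i => by
    rw [← sq_abs, ← Real.rpow_natCast, ← Real.rpow_mul (abs_nonneg _)]
    congr 1
    push_cast
    ring
  have hHolder := Real.inner_le_weight_mul_Lp_of_nonneg univ (p := p / 2) (by linarith)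
    (fun _ => 1) (fun i => w i ^ 2) (fun _ => zero_le_one) (fun i => sq_nonneg _)
  simp only [one_mul, sum_const, card_univ, nsmul_eq_mul, mul_one, hpow] at hHolder
  calc √(w ⬝ᵥ w) = (∑ i, w i ^ 2) ^ (1 / 2 : ℝ) := by
        rw [Real.sqrt_eq_rpow]; simp [dotProduct, sq]
    _ ≤ ((Fintype.card ι : ℝ) ^ (1 - (p / 2)⁻¹) * (∑ i, |w i| ^ p) ^ (p / 2)⁻¹)
          ^ (1 / 2 : ℝ) := by
        gcongr
    _ = _ := by
        rw [Real.mul_rpow (by positivity) (by positivity), ← Real.rpow_mul (by positivity),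
          ← Real.rpow_mul (by positivity)]
        congr 2 <;> field_simp

end Norms

section TwoPoint

variable {Ω : Type*} [MeasurableSpace Ω] {μ ν : Measure Ω} {E D : ℝ}

-- Layer cake: integrate the set inequality over the level sets `{t < g}`, `0 < t ≤ B`.
theorem lintegral_le_of_measure_le
    (hμν : ∀ S, MeasurableSet S → μ S ≤ ENNReal.ofReal E * ν S + ENNReal.ofReal D)
    {g : Ω → ℝ} (hg : Measurable g) (hg0 : 0 ≤ g) {B : ℝ} (hgB : ∀ ω, g ω ≤ B) :
    ∫⁻ ω, ENNReal.ofReal (g ω) ∂μ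
      ≤ ENNReal.ofReal E * ∫⁻ ω, ENNReal.ofReal (g ω) ∂ν + ENNReal.ofReal D * ENNReal.ofReal B := by
  have hlevel : ∀ t ∈ Set.Ioi (0 : ℝ), μ {ω | t < g ω} ≤ ENNReal.ofReal E * ν {ω | t < g ω}
      + (Set.Iic B).indicator (fun _ => ENNReal.ofReal D) t := by
    intro t _
    by_cases htB : t ≤ B
    · simpa [htB] using hμν _ (measurableSet_lt measurable_const hg)
    · have : {ω | t < g ω} = ∅ := by
        ext ω; simpa using (hgB ω).trans (le_of_not_ge htB)
      simp [this]
  have hmeas : Measurable fun t : ℝ => ν {ω | t < g ω} :=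
    Antitone.measurable fun _ _ hst => measure_mono fun _ h => lt_of_le_of_lt hst h
  rw [lintegral_eq_lintegral_meas_lt μ (.of_forall hg0) hg.aemeasurable,
    lintegral_eq_lintegral_meas_lt ν (.of_forall hg0) hg.aemeasurable]
  calc ∫⁻ t in Set.Ioi 0, μ {ω | t < g ω}
      ≤ ∫⁻ t in Set.Ioi 0, (ENNReal.ofReal E * ν {ω | t < g ω}
          + (Set.Iic B).indicator (fun _ => ENNReal.ofReal D) t) :=
        setLIntegral_mono' measurableSet_Ioi hlevel
    _ = _ := by
        rw [lintegral_add_left (hmeas.const_mul _), lintegral_const_mul _ hmeas,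
          lintegral_indicator_const measurableSet_Iic, Measure.restrict_apply measurableSet_Iic,
          Set.Iic_inter_Ioi, Real.volume_Ioc, sub_zero]

-- Test with `f - b` clipped to `[0, a - b]`.
theorem ofReal_le_lintegral_abs_sub_add_lintegral_abs_sub_of_le [IsProbabilityMeasure μ]
    (hE : 1 ≤ E) (hD : 0 ≤ D)
    (hμν : ∀ S, MeasurableSet S → μ S ≤ ENNReal.ofReal E * ν S + ENNReal.ofReal D)
    {f : Ω → ℝ} (hf : Measurable f) {a b : ℝ} (hba : b ≤ a) :
    ENNReal.ofReal ((a - b) * (1 - D) / E)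
      ≤ ∫⁻ ω, ENNReal.ofReal |f ω - a| ∂μ + ∫⁻ ω, ENNReal.ofReal |f ω - b| ∂ν := by
  set g : Ω → ℝ := fun ω => min (a - b) (max 0 (f ω - b))
  have hg : Measurable g := measurable_const.min (measurable_const.max (hf.sub_const b))
  have hg0 : 0 ≤ g := fun ω => le_min (sub_nonneg.mpr hba) (le_max_left _ _)
  have hga : ∀ ω, a - b ≤ g ω + |f ω - a| := fun ω => by
    simp only [g]; rw [min_def, max_def]; split_ifs <;> cases abs_cases (f ω - a) <;> linarith
  have hgb : ∀ ω, g ω ≤ |f ω - b| := fun ω => by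
    simp only [g]; rw [min_def, max_def]; split_ifs <;> cases abs_cases (f ω - b) <;> linarith
  set X := ∫⁻ ω, ENNReal.ofReal |f ω - a| ∂μ
  set Y := ∫⁻ ω, ENNReal.ofReal |f ω - b| ∂ν
  have key : ENNReal.ofReal (a - b) ≤ ENNReal.ofReal E * (X + Y) + ENNReal.ofReal (D * (a - b)) :=
    calc ENNReal.ofReal (a - b) = ∫⁻ _, ENNReal.ofReal (a - b) ∂μ := by simp
      _ ≤ ∫⁻ ω, (ENNReal.ofReal (g ω) + ENNReal.ofReal |f ω - a|) ∂μ := lintegral_mono fun ω => by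
          rw [← ofReal_add (hg0 ω) (abs_nonneg _)]; exact ofReal_le_ofReal (hga ω)
      _ = ∫⁻ ω, ENNReal.ofReal (g ω) ∂μ + X := lintegral_add_left hg.ennreal_ofReal _
      _ ≤ ENNReal.ofReal E * ∫⁻ ω, ENNReal.ofReal (g ω) ∂ν
            + ENNReal.ofReal D * ENNReal.ofReal (a - b) + X := by
          gcongr; exact lintegral_le_of_measure_le hμν hg hg0 fun ω => min_le_left _ _
      _ ≤ ENNReal.ofReal E * Y + ENNReal.ofReal D * ENNReal.ofReal (a - b)
            + ENNReal.ofReal E * X := by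
          gcongr
          · exact lintegral_mono fun ω => ofReal_le_ofReal (hgb ω)
          · exact le_mul_of_one_le_left' (by simpa using ofReal_le_ofReal hE)
      _ = ENNReal.ofReal E * (X + Y) + ENNReal.ofReal (D * (a - b)) := by
          rw [ofReal_mul hD]; ring
  rw [ofReal_div_of_pos (by linarith)]
  refine div_le_of_le_mul' ?_
  calc ENNReal.ofReal ((a - b) * (1 - D))
      = ENNReal.ofReal (a - b) - ENNReal.ofReal (D * (a - b)) := by
        rw [← ofReal_sub _ (mul_nonneg hD (sub_nonneg.mpr hba))]; ring_nf
    _ ≤ ENNReal.ofReal E * (X + Y) := tsub_le_iff_right.mpr key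

theorem ofReal_le_lintegral_abs_sub_add_lintegral_abs_sub [IsProbabilityMeasure μ]
    [IsProbabilityMeasure ν] (hE : 1 ≤ E) (hD : 0 ≤ D)
    (hμν : ∀ S, MeasurableSet S → μ S ≤ ENNReal.ofReal E * ν S + ENNReal.ofReal D)
    (hνμ : ∀ S, MeasurableSet S → ν S ≤ ENNReal.ofReal E * μ S + ENNReal.ofReal D)
    {f : Ω → ℝ} (hf : Measurable f) (a b : ℝ) :
    ENNReal.ofReal (|a - b| * (1 - D) / E)
      ≤ ∫⁻ ω, ENNReal.ofReal |f ω - a| ∂μ + ∫⁻ ω, ENNReal.ofReal |f ω - b| ∂ν := by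
  rcases le_total b a with hba | hab
  · rw [abs_of_nonneg (sub_nonneg.mpr hba)]
    exact ofReal_le_lintegral_abs_sub_add_lintegral_abs_sub_of_le hE hD hμν hf hba
  · rw [abs_sub_comm, abs_of_nonneg (sub_nonneg.mpr hab), add_comm]
    exact ofReal_le_lintegral_abs_sub_add_lintegral_abs_sub_of_le hE hD hνμ hf hab

end TwoPoint

-- Assouad's lemma on the hypercube `ι → Bool`.
theorem exists_le_sum_lintegral_abs_sub {ι Ω : Type*} [Fintype ι] [DecidableEq ι]
    [MeasurableSpace Ω] (μ : (ι → Bool) → Measure Ω) (hμ : ∀ z, IsProbabilityMeasure (μ z))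
    {E D : ℝ} (hE : 1 ≤ E) (hD : 0 ≤ D)
    (hflip : ∀ i z S, MeasurableSet S →
      μ z S ≤ ENNReal.ofReal E * μ (Function.update z i (!z i)) S + ENNReal.ofReal D)
    {F : ι → Ω → ℝ} (hF : ∀ i, Measurable (F i)) (c : (ι → Bool) → ι → ℝ) {r : ι → ℝ}
    (hc : ∀ i z, |c z i - c (Function.update z i (!z i)) i| = r i) :
    ∃ z, ENNReal.ofReal ((∑ i, r i) * (1 - D) / (2 * E))
      ≤ ∑ i, ∫⁻ ω, ENNReal.ofReal |F i ω - c z i| ∂μ z := by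
  set err : ι → (ι → Bool) → ℝ≥0∞ := fun i z => ∫⁻ ω, ENNReal.ofReal |F i ω - c z i| ∂μ z
  have hedge : ∀ i z, ENNReal.ofReal (r i * (1 - D) / E)
      ≤ err i z + err i (Function.update z i (!z i)) := by
    intro i z
    have := hμ z
    have := hμ (Function.update z i (!z i))
    rw [← hc i z]
    refine ofReal_le_lintegral_abs_sub_add_lintegral_abs_sub hE hD (hflip i z) ?_ (hF i) _ _
    simpa using hflip i (Function.update z i (!z i))
  have hcoord : ∀ i, Fintype.card (ι → Bool) • ENNReal.ofReal (r i * (1 - D) / E)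
      ≤ 2 * ∑ z, err i z := by
    intro i
    let σ := Function.Involutive.toPerm (fun z : ι → Bool => Function.update z i (!z i))
      fun z => by simp
    calc Fintype.card (ι → Bool) • ENNReal.ofReal (r i * (1 - D) / E)
        ≤ ∑ z, (err i z + err i (σ z)) := by
          rw [← card_univ, ← sum_const]; exact sum_le_sum fun z _ => hedge i z
      _ = 2 * ∑ z, err i z := by rw [sum_add_distrib, Equiv.sum_comp σ, two_mul]
  set a := ENNReal.ofReal ((∑ i, r i) * (1 - D) / (2 * E))
  have h2a : 2 * a ≤ ∑ i, ENNReal.ofReal (r i * (1 - D) / E) :=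
    calc 2 * a = ENNReal.ofReal (∑ i, r i * (1 - D) / E) := by
          rw [← ENNReal.ofReal_ofNat 2, ← ENNReal.ofReal_mul zero_le_two, ← sum_div, ← sum_mul]
          congr 1
          field_simp
      _ ≤ _ := le_sum_of_subadditive _ ofReal_zero.le (fun _ _ => ofReal_add_le) _ _
  have htotal : 2 * ∑ _z : ι → Bool, a ≤ 2 * ∑ z, ∑ i, err i z :=
    calc 2 * ∑ _z : ι → Bool, a = Fintype.card (ι → Bool) • (2 * a) := by
          rw [sum_const, card_univ, mul_smul_comm]
      _ ≤ ∑ i, Fintype.card (ι → Bool) • ENNReal.ofReal (r i * (1 - D) / E) := by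
          rw [← smul_sum]; gcongr
      _ ≤ ∑ i, 2 * ∑ z, err i z := sum_le_sum fun i _ => hcoord i
      _ = 2 * ∑ z, ∑ i, err i z := by rw [← mul_sum, sum_comm]
  obtain ⟨z, -, hz⟩ := ENNReal.exists_le_of_sum_le univ_nonempty
    ((ENNReal.mul_le_mul_iff_right two_ne_zero ofNat_ne_top).mp htotal)
  exact ⟨z, hz⟩

def groupDelta (ε δ : ℝ) (k : ℕ) : ℝ := δ * ∑ j ∈ range k, Real.exp (j * ε)

theorem IsDP.apply_add_nsmul_le {ι Ω : Type*} [Fintype ι] [MeasurableSpace Ω]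
    {M : (ι → ℝ) → Measure Ω} {ε δ : ℝ} (hM : IsDP M ε δ) (hδ : 0 ≤ δ) {d : ι → ℝ}
    (hd : ∑ i, |d i| ≤ 1) {S : Set Ω} (hS : MeasurableSet S) (k : ℕ) (x : ι → ℝ) :
    M (x + k • d) S
      ≤ ENNReal.ofReal (Real.exp (k * ε)) * M x S + ENNReal.ofReal (groupDelta ε δ k) := by
  induction k generalizing x with
  | zero => simp [groupDelta]
  | succ k ih =>
    have hstep : M (x + d) S ≤ ENNReal.ofReal (Real.exp ε) * M x S + ENNReal.ofReal δ :=
      hM _ _ (by simpa [Neighboring] using hd) S hS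
    calc M (x + (k + 1) • d) S = M ((x + d) + k • d) S := by rw [succ_nsmul', add_assoc]
      _ ≤ ENNReal.ofReal (Real.exp (k * ε)) * M (x + d) S
          + ENNReal.ofReal (groupDelta ε δ k) := ih _
      _ ≤ ENNReal.ofReal (Real.exp (k * ε))
            * (ENNReal.ofReal (Real.exp ε) * M x S + ENNReal.ofReal δ)
          + ENNReal.ofReal (groupDelta ε δ k) := by gcongr
      _ = _ := by
        rw [mul_add, ← mul_assoc, ← ofReal_mul (Real.exp_nonneg _), ← Real.exp_add, add_assoc,
          ← ofReal_mul (Real.exp_nonneg _), ← ofReal_add (by positivity)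
            (by simp only [groupDelta]; positivity), groupDelta, groupDelta, sum_range_succ]
        push_cast
        ring_nf

theorem lintegral_rpow_one_div_le {Ω : Type*} [MeasurableSpace Ω] (μ : Measure Ω)
    [IsProbabilityMeasure μ] {p : ℝ} (hp : 1 ≤ p) {H : Ω → ℝ≥0∞} (hH : AEMeasurable H μ) :
    ∫⁻ ω, H ω ^ (1 / p) ∂μ ≤ (∫⁻ ω, H ω ∂μ) ^ (1 / p) := by
  have := eLpNorm'_le_eLpNorm'_of_exponent_le one_pos hp μ
    (hH.pow_const (1 / p)).aestronglyMeasurable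
  simpa [eLpNorm'_eq_lintegral_enorm, ← ENNReal.rpow_mul, (by positivity : p ≠ 0)] using this

theorem sum_lintegral_abs_mulVec_sub_le {ι κ : Type*} [Fintype ι] [Fintype κ] {T : Matrix ι κ ℝ}
    (hT : ∀ w, (T *ᵥ w) ⬝ᵥ (T *ᵥ w) ≤ w ⬝ᵥ w) (μ : Measure (κ → ℝ)) [IsProbabilityMeasure μ]
    {p : ℝ} (hp : 2 ≤ p) (v : κ → ℝ) :
    ∑ i, ∫⁻ y, ENNReal.ofReal |(T *ᵥ y) i - (T *ᵥ v) i| ∂μ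
      ≤ ENNReal.ofReal (√(Fintype.card ι) * Fintype.card κ ^ (1 / 2 - 1 / p))
        * (∫⁻ y, ENNReal.ofReal (∑ j, |y j - v j| ^ p) ∂μ) ^ (1 / p) := by
  set K := √(Fintype.card ι) * (Fintype.card κ : ℝ) ^ (1 / 2 - 1 / p)
  have hpt : ∀ y, ∑ i, |(T *ᵥ y) i - (T *ᵥ v) i| ≤ K * (∑ j, |y j - v j| ^ p) ^ (1 / p) := by
    intro y
    calc ∑ i, |(T *ᵥ y) i - (T *ᵥ v) i| = ∑ i, |(T *ᵥ (y - v)) i| := by simp [mulVec_sub]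
      _ ≤ √(Fintype.card ι) * √((T *ᵥ (y - v)) ⬝ᵥ (T *ᵥ (y - v))) :=
          sum_abs_le_sqrt_card_mul_sqrt_dotProduct_self _
      _ ≤ √(Fintype.card ι) * √((y - v) ⬝ᵥ (y - v)) := by gcongr; exact hT _
      _ ≤ √(Fintype.card ι) * ((Fintype.card κ : ℝ) ^ (1 / 2 - 1 / p)
            * (∑ j, |(y - v) j| ^ p) ^ (1 / p)) := by gcongr; exact sqrt_dotProduct_self_le hp _
      _ = K * (∑ j, |y j - v j| ^ p) ^ (1 / p) := by simp [K, mul_assoc]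
  have hmeas : ∀ i, Measurable fun y : κ → ℝ => (T *ᵥ y) i := fun i => by fun_prop
  have hG : Measurable fun y : κ → ℝ => ENNReal.ofReal (∑ j, |y j - v j| ^ p) := by fun_prop
  calc ∑ i, ∫⁻ y, ENNReal.ofReal |(T *ᵥ y) i - (T *ᵥ v) i| ∂μ
      = ∫⁻ y, ENNReal.ofReal (∑ i, |(T *ᵥ y) i - (T *ᵥ v) i|) ∂μ := by
        rw [← lintegral_finsetSum _ fun i _ => ((hmeas i).sub_const _).abs.ennreal_ofReal]
        simp_rw [ofReal_sum_of_nonneg fun i _ => abs_nonneg _]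
    _ ≤ ∫⁻ y, ENNReal.ofReal K * ENNReal.ofReal (∑ j, |y j - v j| ^ p) ^ (1 / p) ∂μ := by
        refine lintegral_mono fun y => (ofReal_le_ofReal (hpt y)).trans_eq ?_
        rw [ofReal_mul (by positivity), ofReal_rpow_of_nonneg (by positivity) (by positivity)]
    _ = ENNReal.ofReal K * ∫⁻ y, ENNReal.ofReal (∑ j, |y j - v j| ^ p) ^ (1 / p) ∂μ :=
        lintegral_const_mul' _ _ ofReal_ne_top
    _ ≤ _ := by gcongr; exact lintegral_rpow_one_div_le μ (by linarith) hG.aemeasurable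

theorem IsDP.ofReal_le_mul_errLp {ι κ : Type*} [Fintype ι] [Fintype κ] [DecidableEq ι]
    {M : (ι → ℝ) → Measure (κ → ℝ)} {ε δ p : ℝ} (hM : IsDP M ε δ)
    (hprob : ∀ x, IsProbabilityMeasure (M x)) (hε : 0 ≤ ε) (hδ : 0 ≤ δ) (hp : 2 ≤ p)
    (A : Matrix κ ι ℝ) (k : ℕ) :
    ENNReal.ofReal (k * schatten1 A * (1 - groupDelta ε δ k) / (2 * Real.exp (k * ε)))
      ≤ ENNReal.ofReal (√(Fintype.card ι) * Fintype.card κ ^ (1 / 2 - 1 / p)) * errLp M A p := by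
  obtain ⟨T, hTA, hT⟩ := exists_contraction_mul_eq_sqrtGram A
  set X : (ι → Bool) → ι → ℝ := fun z j => if z j then k else 0
  have hX : ∀ i z,
      X z = X (Function.update z i (!z i)) + k • Pi.single i (if z i then 1 else -1) := by
    intro i z
    funext j
    rcases eq_or_ne j i with rfl | hj
    · cases h : z j <;> simp [X, h]
    · simp [X, hj]
  have hflip : ∀ i z S, MeasurableSet S → M (X z) S ≤ ENNReal.ofReal (Real.exp (k * ε))
      * M (X (Function.update z i (!z i))) S + ENNReal.ofReal (groupDelta ε δ k) := by
    intro i z S hS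
    rw [hX i z]
    refine hM.apply_add_nsmul_le hδ ?_ hS k _
    cases z i <;> simp [Pi.single_apply, apply_ite (abs : ℝ → ℝ)]
  have hedge : ∀ i z, |(T *ᵥ (A *ᵥ X z)) i - (T *ᵥ (A *ᵥ X (Function.update z i (!z i)))) i|
      = k * sqrtGram A i i := by
    intro i z
    rw [mulVec_mulVec, mulVec_mulVec, hTA, hX i z, mulVec_add, mulVec_smul, Pi.add_apply,
      add_sub_cancel_left, mulVec_single]
    have := (posSemidef_sqrtGram A).diag_nonneg (i := i)
    cases z i <;> simp [abs_of_nonneg this]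
  obtain ⟨z, hz⟩ := exists_le_sum_lintegral_abs_sub (fun z => M (X z)) (fun z => hprob _)
    (Real.one_le_exp (by positivity)) (by simp only [groupDelta]; positivity) hflip
    (F := fun i y => (T *ᵥ y) i) (fun i => by fun_prop) (fun z => T *ᵥ (A *ᵥ X z)) hedge
  calc ENNReal.ofReal (k * schatten1 A * (1 - groupDelta ε δ k) / (2 * Real.exp (k * ε)))
      = ENNReal.ofReal ((∑ i, k * sqrtGram A i i) * (1 - groupDelta ε δ k)
          / (2 * Real.exp (k * ε))) := by
        rw [schatten1_eq_trace_sqrtGram, ← mul_sum]; rfl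
    _ ≤ _ := hz
    _ ≤ _ := sum_lintegral_abs_mulVec_sub_le hT (M (X z)) hp (A *ᵥ X z)
    _ ≤ _ := by gcongr; exact le_iSup_of_le (X z) le_rfl

def deltaTilde (ε δ : ℝ) : ℝ :=
  2 * Real.exp (2 * ε) * (Real.exp (1 / 2) - 1) * δ / (Real.exp ε - 1)

theorem groupDelta_le_deltaTilde {ε δ : ℝ} (hε : 0 < ε) (hδ : 0 ≤ δ) {k : ℕ}
    (hk : k * ε ≤ 1 / 2) : groupDelta ε δ k ≤ deltaTilde ε δ := by
  have hexp : 0 < Real.exp ε - 1 := by linarith [Real.add_one_lt_exp hε.ne']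
  have hgeom : ∑ j ∈ range k, Real.exp (j * ε) = (Real.exp (k * ε) - 1) / (Real.exp ε - 1) := by
    simp_rw [Real.exp_nat_mul]
    exact geom_sum_eq (by linarith) k
  have hhalf : Real.exp (k * ε) - 1 ≤ Real.exp (1 / 2) - 1 := by gcongr
  have hfactor : 1 ≤ 2 * Real.exp (2 * ε) := by
    linarith [Real.one_le_exp (by positivity : 0 ≤ 2 * ε)]
  calc groupDelta ε δ k ≤ δ * ((Real.exp (1 / 2) - 1) / (Real.exp ε - 1)) := by
        rw [groupDelta, hgeom]; gcongr
    _ ≤ 2 * Real.exp (2 * ε) * (δ * ((Real.exp (1 / 2) - 1) / (Real.exp ε - 1))) :=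
        le_mul_of_one_le_left (mul_nonneg hδ (div_nonneg
          (sub_nonneg.mpr (Real.one_le_exp (by norm_num))) hexp.le)) hfactor
    _ = deltaTilde ε δ := by rw [deltaTilde]; ring

theorem natFloor_one_div_two_mul_mul_le {ε : ℝ} (hε : 0 < ε) : ⌊1 / (2 * ε)⌋₊ * ε ≤ 1 / 2 :=
  calc ⌊1 / (2 * ε)⌋₊ * ε ≤ 1 / (2 * ε) * ε := by gcongr; exact Nat.floor_le (by positivity)
    _ = 1 / 2 := by field_simp

theorem one_div_four_mul_le_natFloor {ε : ℝ} (hε : 0 < ε) (hε2 : ε ≤ 1 / 2) :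
    1 / (4 * ε) ≤ ⌊1 / (2 * ε)⌋₊ := by
  have h1 : (1 : ℝ) ≤ ⌊1 / (2 * ε)⌋₊ := by
    exact_mod_cast Nat.one_le_floor_iff _ |>.mpr (by rw [le_div_iff₀ (by positivity)]; linarith)
  have h2 := Nat.lt_floor_add_one (1 / (2 * ε))
  have : 1 / (4 * ε) = 1 / (2 * ε) / 2 := by field_simp; ring
  linarith

theorem one_div_sixteen_mul_le_natFloor_div_exp {ε : ℝ} (hε : 0 < ε) (hε2 : ε < 1 / 2) :
    1 / (16 * ε) ≤ ⌊1 / (2 * ε)⌋₊ / (2 * Real.exp (⌊1 / (2 * ε)⌋₊ * ε)) := by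
  have hE : Real.exp (⌊1 / (2 * ε)⌋₊ * ε) ≤ 2 := by
    have hk := natFloor_one_div_two_mul_mul_le hε
    refine (Real.exp_bound_div_one_sub_of_interval (by positivity) (by linarith)).trans ?_
    rw [div_le_iff₀ (by linarith)]
    linarith
  calc 1 / (16 * ε) = 1 / (4 * ε) / 4 := by field_simp; ring
    _ ≤ ⌊1 / (2 * ε)⌋₊ / 4 := by gcongr; exact one_div_four_mul_le_natFloor hε hε2.le
    _ ≤ _ := by gcongr; linarith

theorem ofReal_one_sub_deltaTilde_mul_le {n m : ℕ} {ε δ p s : ℝ} {e : ℝ≥0∞} (hε : 0 < ε)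
    (hε2 : ε < 1 / 2) (hδ : 0 ≤ δ) (hs : 0 ≤ s)
    (hbound : ENNReal.ofReal (⌊1 / (2 * ε)⌋₊ * s * (1 - groupDelta ε δ ⌊1 / (2 * ε)⌋₊)
        / (2 * Real.exp (⌊1 / (2 * ε)⌋₊ * ε)))
      ≤ ENNReal.ofReal (√n * (m : ℝ) ^ (1 / 2 - 1 / p)) * e) :
    ENNReal.ofReal ((1 - deltaTilde ε δ) * (m : ℝ) ^ (1 / p - 1 / 2) * s / (16 * ε * √n)) ≤ e := by
  set k := ⌊1 / (2 * ε)⌋₊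
  set t := (1 - deltaTilde ε δ) * (m : ℝ) ^ (1 / p - 1 / 2) * s / (16 * ε * √n)
  rcases le_or_gt t 0 with ht | ht
  · simp [ofReal_of_nonpos ht]
  have hm : (m : ℝ) ^ (1 / p - 1 / 2) ≠ 0 := by
    rintro h; simp only [t, h, mul_zero, zero_mul, zero_div, lt_self_iff_false] at ht
  have hn : √n ≠ 0 := by
    rintro h; simp [t, h] at ht
  have hδt : 0 < 1 - deltaTilde ε δ :=
    pos_of_mul_pos_left (by simpa only [t, mul_assoc, mul_div_assoc] using ht) (by positivity)
  have hneg : (m : ℝ) ^ (1 / 2 - 1 / p) = ((m : ℝ) ^ (1 / p - 1 / 2))⁻¹ := by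
    rw [← Real.rpow_neg (Nat.cast_nonneg m), neg_sub]
  have hK : 0 < √n * (m : ℝ) ^ (1 / 2 - 1 / p) := by
    rw [hneg]; positivity
  have htK : t * (√n * (m : ℝ) ^ (1 / 2 - 1 / p))
      ≤ k * s * (1 - groupDelta ε δ k) / (2 * Real.exp (k * ε)) := by
    have hD := groupDelta_le_deltaTilde hε hδ (natFloor_one_div_two_mul_mul_le hε)
    calc t * (√n * (m : ℝ) ^ (1 / 2 - 1 / p)) = (1 - deltaTilde ε δ) * s * (1 / (16 * ε)) := by
          rw [hneg]
          simp only [t]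
          generalize (m : ℝ) ^ (1 / p - 1 / 2) = y at hm ⊢
          field_simp
      _ ≤ (1 - groupDelta ε δ k) * s * (k / (2 * Real.exp (k * ε))) :=
          mul_le_mul (mul_le_mul_of_nonneg_right (by linarith) hs)
            (one_div_sixteen_mul_le_natFloor_div_exp hε hε2) (by positivity)
            (mul_nonneg (by linarith) hs)
      _ = _ := by ring
  refine (ENNReal.mul_le_mul_iff_right (ofReal_pos.mpr hK).ne' ofReal_ne_top).mp ?_
  calc ENNReal.ofReal (√n * (m : ℝ) ^ (1 / 2 - 1 / p)) * ENNReal.ofReal t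
      = ENNReal.ofReal (t * (√n * (m : ℝ) ^ (1 / 2 - 1 / p))) := by
        rw [mul_comm, ofReal_mul ht.le]
    _ ≤ _ := (ofReal_le_ofReal htK).trans hbound

end DPPaper

/-- lower bound for general (ε,δ)-DP mechanisms in terms of the Schatten-1 norm. -/
theorem schatten_lower_bound_DP :
    ∃ C : ℝ, 0 < C ∧
      ∀ (n m : ℕ) (ε δ p : ℝ), 0 < ε → ε < 1 / 2 → 0 ≤ δ → δ ≤ 1 → 2 ≤ p →
        ∀ (A : Matrix (Fin m) (Fin n) ℝ) (M : (Fin n → ℝ) → Measure (Fin m → ℝ)),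
          (∀ x, IsProbabilityMeasure (M x)) → IsDP M ε δ →
          errLp M A p ≥ ENNReal.ofReal
            ((1 - 2 * Real.exp (2 * ε) * (Real.exp (1 / 2) - 1) * δ / (Real.exp ε - 1))
              * (m : ℝ) ^ ((1 : ℝ) / p - 1 / 2) * schatten1 A / (C * ε * Real.sqrt n)) := by
  refine ⟨16, by norm_num, fun n m ε δ p hε hε2 hδ _ hp A M hprob hM => ?_⟩
  have hbound := hM.ofReal_le_mul_errLp hprob hε.le hδ hp A ⌊1 / (2 * ε)⌋₊
  rw [Fintype.card_fin, Fintype.card_fin] at hbound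
  exact ofReal_one_sub_deltaTilde_mul_le hε hε2 hδ (schatten1_nonneg A) hbound
end
end

section
/- Let d ≥ 0 and let H_d be the 2^d × 2^d Hadamard matrix. Let Q ∈ ℝ^{ℓ × 2^d} be any matrix formed by selecting ℓ ≥ 1 distinct rows of H_d. Then κ(Q) ≥ 2. In particular, the parity query matrix Q_{d,w} satisfies κ(Q_{d,w}) ≥ 2. -/
open MeasureTheory Matrix
open scoped ENNReal

noncomputable section

open DPPaper

/-!
For a unit vector `θ`, the sensitivity polytope `A B₁ⁿ` contains `± A eⱼ` for every column `j`,
so its width in direction `θ` is at least `2 |(θᵀA)ⱼ|`. If the rows of `A` are orthogonal of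
squared length `n`, the number of columns, then `‖θᵀA‖₂² = n ‖θ‖₂² = n`, so some coordinate of
`θᵀA` has absolute value at least `1`. Distinct rows of `H_d`, and the characters
`x ↦ ∏_{i ∈ P} xᵢ` of `{±1}^d`, are such rows with `n = 2^d`.
-/

namespace DPPaper

theorem submatrix_mul_transpose_eq_smul_one {K N L α : Type*} [Fintype N] [DecidableEq K]
    [DecidableEq L] [Semiring α] {A : Matrix K N α} {c : α} (hA : A * Aᵀ = c • 1)
    {r : L → K} (hr : Function.Injective r) :
    A.submatrix r id * (A.submatrix r id)ᵀ = c • 1 := by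
  rw [transpose_submatrix, ← submatrix_mul A Aᵀ r id r Function.bijective_id, hA]
  change c • (1 : Matrix K K α).submatrix r r = _
  rw [submatrix_one r hr]

theorem fromBlocks_smul_one {m n α : Type*} [DecidableEq m] [DecidableEq n] [Semiring α]
    (c : α) : fromBlocks (c • 1 : Matrix m m α) 0 0 (c • 1 : Matrix n n α) = c • 1 := by
  rw [← fromBlocks_one, fromBlocks_smul, smul_zero, smul_zero]

theorem sub_le_csSup_sub_csInf {S : Set ℝ} (hS : Bornology.IsBounded S) {a b : ℝ}
    (ha : a ∈ S) (hb : b ∈ S) : a - b ≤ sSup S - sInf S :=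
  sub_le_sub (le_csSup hS.bddAbove ha) (csInf_le hS.bddBelow hb)

section Kappa

variable {K N : Type*} [Fintype K] [Fintype N]

theorem mem_image_sensPolytope_iff (A : Matrix K N ℝ) (θ : K → ℝ) (t : ℝ) :
    t ∈ (fun v => ∑ i, θ i * v i) '' sensPolytope A ↔
      ∃ x : N → ℝ, ∑ j, |x j| ≤ 1 ∧ (θ ᵥ* A) ⬝ᵥ x = t := by
  simp only [sensPolytope, Set.mem_image, Set.mem_ofPred_eq]
  constructor
  · rintro ⟨_, ⟨x, hx, rfl⟩, rfl⟩
    exact ⟨x, hx, (dotProduct_mulVec θ A x).symm⟩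
  · rintro ⟨x, hx, rfl⟩
    exact ⟨_, ⟨x, hx, rfl⟩, dotProduct_mulVec θ A x⟩

theorem abs_dotProduct_le_sum_abs_of_sum_abs_le_one (g x : N → ℝ) (hx : ∑ j, |x j| ≤ 1) :
    |g ⬝ᵥ x| ≤ ∑ j, |g j| :=
  calc |g ⬝ᵥ x| ≤ ∑ j, |g j * x j| := Finset.abs_sum_le_sum_abs _ _
    _ = ∑ j, |g j| * |x j| := by simp only [abs_mul]
    _ ≤ ∑ j, |g j| := Finset.sum_le_sum fun j _ =>
        mul_le_of_le_one_right (abs_nonneg _)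
          ((Finset.single_le_sum (fun i _ => abs_nonneg (x i)) (Finset.mem_univ j)).trans hx)

theorem two_mul_abs_vecMul_le_width (A : Matrix K N ℝ) (θ : K → ℝ) (j : N) :
    2 * |(θ ᵥ* A) j| ≤ width (sensPolytope A) θ := by
  classical
  set g := θ ᵥ* A
  set S := (fun v => ∑ i, θ i * v i) '' sensPolytope A
  have hbdd : Bornology.IsBounded S := by
    refine (Metric.isBounded_Icc (-∑ j, |g j|) (∑ j, |g j|)).subset fun t ht => ?_
    obtain ⟨x, hx, rfl⟩ := (mem_image_sensPolytope_iff A θ t).1 ht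
    exact abs_le.1 (abs_dotProduct_le_sum_abs_of_sum_abs_le_one g x hx)
  have hmem : ∀ s : ℝ, |s| ≤ 1 → s * g j ∈ S := fun s hs =>
    (mem_image_sensPolytope_iff A θ _).2
      ⟨Pi.single j s, by simpa [Pi.single_apply, apply_ite] using hs, by
        rw [dotProduct_single, mul_comm]⟩
  have hplus : g j ∈ S := by simpa using hmem 1 (by simp)
  have hminus : -g j ∈ S := by simpa using hmem (-1) (by simp)
  have h₁ := sub_le_csSup_sub_csInf hbdd hplus hminus
  have h₂ := sub_le_csSup_sub_csInf hbdd hminus hplus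
  rw [width, ← abs_two, ← abs_mul, abs_le]
  constructor <;> linarith

theorem sum_vecMul_sq_of_mul_transpose_eq_smul_one [DecidableEq K] {A : Matrix K N ℝ} {c : ℝ}
    (hA : A * Aᵀ = c • 1) (θ : K → ℝ) : ∑ j, (θ ᵥ* A) j ^ 2 = c * ∑ i, θ i ^ 2 :=
  calc ∑ j, (θ ᵥ* A) j ^ 2 = (θ ᵥ* A) ⬝ᵥ (θ ᵥ* A) := by simp only [dotProduct, sq]
    _ = θ ⬝ᵥ (θ ᵥ* (A * Aᵀ)) := by
      rw [← dotProduct_mulVec, ← vecMul_transpose, vecMul_vecMul]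
    _ = c * ∑ i, θ i ^ 2 := by
      rw [hA, vecMul_smul, vecMul_one, dotProduct_smul, smul_eq_mul]
      simp only [dotProduct, sq]

theorem exists_one_le_abs_vecMul [Nonempty N] [DecidableEq K] {A : Matrix K N ℝ}
    (hA : A * Aᵀ = (Fintype.card N : ℝ) • 1) {θ : K → ℝ} (hθ : ∑ i, θ i ^ 2 = 1) :
    ∃ j, 1 ≤ |(θ ᵥ* A) j| := by
  by_contra! h
  have hlt : ∑ j, (θ ᵥ* A) j ^ 2 < ∑ _j : N, 1 :=
    Finset.sum_lt_sum_of_nonempty Finset.univ_nonempty fun j _ =>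
      (sq_lt_one_iff_abs_lt_one _).2 (h j)
  rw [sum_vecMul_sq_of_mul_transpose_eq_smul_one hA, hθ] at hlt
  simp at hlt

theorem two_le_kappa_of_mul_transpose_eq [Nonempty K] [Nonempty N] [DecidableEq K]
    {A : Matrix K N ℝ} (hA : A * Aᵀ = (Fintype.card N : ℝ) • 1) : 2 ≤ kappa A := by
  obtain ⟨i₀⟩ := ‹Nonempty K›
  refine le_csInf ⟨_, Pi.single i₀ 1, by simp [Pi.single_apply], rfl⟩ ?_
  rintro _ ⟨θ, hθ, rfl⟩
  obtain ⟨j, hj⟩ := exists_one_le_abs_vecMul hA hθ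
  linarith [two_mul_abs_vecMul_le_width A θ j]

end Kappa

theorem hadamard_mul_transpose (d : ℕ) : Hadamard d * (Hadamard d)ᵀ = (2 ^ d : ℝ) • 1 := by
  induction d with
  | zero =>
    ext i j
    fin_cases i; fin_cases j
    simp only [mul_apply, transpose_apply]
    simp [Hadamard]
  | succ d ih =>
    rw [Hadamard, transpose_reindex, reindex_apply, reindex_apply, submatrix_mul_equiv,
      fromBlocks_transpose, fromBlocks_multiply]
    simp only [transpose_neg, mul_neg, neg_mul, neg_neg, ih, add_neg_cancel]
    rw [← two_smul ℝ, smul_smul, ← pow_succ', fromBlocks_smul_one]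
    change (2 : ℝ) ^ (d + 1) •
      (1 : Matrix (Fin (2 ^ d) ⊕ Fin (2 ^ d)) (Fin (2 ^ d) ⊕ Fin (2 ^ d)) ℝ).submatrix _ _ = _
    rw [submatrix_one_equiv]

def walshMatrix (d : ℕ) : Matrix (Finset (Fin d)) (Fin d → Bool) ℝ :=
  fun P b => ∏ i ∈ P, (if b i then (1 : ℝ) else -1)

theorem parityMatrix_eq_submatrix_walshMatrix (d w : ℕ) :
    parityMatrix d w = (walshMatrix d).submatrix Subtype.val id :=
  rfl

theorem sum_walshMatrix_mul_walshMatrix (d : ℕ) (P Q : Finset (Fin d)) :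
    ∑ b, walshMatrix d P b * walshMatrix d Q b = if P = Q then (2 ^ d : ℝ) else 0 := by
  let f : Fin d → Bool → ℝ := fun i t =>
    (if i ∈ P then (if t then 1 else -1) else 1) * (if i ∈ Q then (if t then 1 else -1) else 1)
  have hfactor : ∀ b, walshMatrix d P b * walshMatrix d Q b = ∏ i, f i (b i) := fun b => by
    simp only [f, walshMatrix, Finset.prod_mul_distrib, Finset.prod_ite_mem, Finset.univ_inter]
  have hcoord : ∀ i, ∑ t, f i t = if (i ∈ P ↔ i ∈ Q) then 2 else 0 := fun i => by
    by_cases hP : i ∈ P <;> by_cases hQ : i ∈ Q <;> norm_num [f, hP, hQ]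
  simp_rw [hfactor, ← Fintype.prod_sum, hcoord, Fintype.prod_ite_zero, ← Finset.ext_iff]
  simp

theorem walshMatrix_mul_transpose (d : ℕ) :
    walshMatrix d * (walshMatrix d)ᵀ = (2 ^ d : ℝ) • 1 := by
  ext P Q
  simp [mul_apply, sum_walshMatrix_mul_walshMatrix, one_apply]

end DPPaper

/-- any selection of distinct rows of a Hadamard matrix has κ ≥ 2;
  in particular κ(Q_{d,w}) ≥ 2. -/
theorem kappa_hadamard_rows_ge_two :
    (∀ (d l : ℕ), 1 ≤ l → ∀ r : Fin l → Fin (2 ^ d), Function.Injective r →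
      kappa (fun i => Hadamard d (r i)) ≥ 2) ∧
    (∀ d w : ℕ, 1 ≤ w → w ≤ d → kappa (parityMatrix d w) ≥ 2) := by
  constructor
  · intro d l hl r hr
    have : Nonempty (Fin l) := ⟨⟨0, hl⟩⟩
    refine two_le_kappa_of_mul_transpose_eq (A := (Hadamard d).submatrix r id) ?_
    simpa using submatrix_mul_transpose_eq_smul_one (hadamard_mul_transpose d) hr
  · intro d w _ hwd
    obtain ⟨P, -, hP⟩ :=
      Finset.exists_subset_card_eq (s := (Finset.univ : Finset (Fin d))) (by simpa using hwd)
    have : Nonempty {P : Finset (Fin d) // P.card = w} := ⟨⟨P, hP⟩⟩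
    rw [parityMatrix_eq_submatrix_walshMatrix]
    refine two_le_kappa_of_mul_transpose_eq ?_
    simpa using submatrix_mul_transpose_eq_smul_one (walshMatrix_mul_transpose d)
      Subtype.val_injective
end
end
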